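/- As $y \to 0^+$, the conditional close density $p(c \mid h \leq y) = \frac{1}{\sqrt{2\pi}} e^{-c^2/2}\,\frac{1 - e^{-2y(y-c)}}{1 - 2\Phi(-y)}\mathbb{1}_{\{c<y\}}$ converges pointwise for each $c < 0$ to $-c\,e^{-c^2/2}$ (the negated Rayleigh density), and to $0$ for each $c > 0$. -/

import Mathlib

noncomputable section
open MeasureTheory Real Filter Topology

/-- The standard normal cumulative distribution function. -/
def stdNormalCDF (x : ℝ) : ℝ :=
  ∫ t in Set.Iic x, (1 / Real.sqrt (2 * Real.pi)) * Real.exp (-t ^ 2 / 2)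

/-- Conditional density of the close given the high stayed below `y`. -/
def condCloseDensity (y c : ℝ) : ℝ :=
  if c < y then
    1 / Real.sqrt (2 * Real.pi) * Real.exp (-c ^ 2 / 2) *
      ((1 - Real.exp (-2 * y * (y - c))) / (1 - 2 * stdNormalCDF (-y)))
  else 0

/-! For `c < 0` and `y ↓ 0` both `1 - exp (-2 y (y - c))` and `1 - 2 Φ(-y) = P(|B₁| ≤ y)`
vanish to first order, with derivatives `-2c` and `2 φ(0) = 2 / √(2π)`, so their ratio tends
to `-c √(2π)` and the prefactor `φ(c)` turns this into `-c e^{-c²/2}`. For `c > 0` the density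
is eventually `0`, since `c < y` fails once `y ≤ c`. -/

open ProbabilityTheory Set

theorem tendsto_div_of_hasDerivAt_of_eq_zero {𝕜 : Type*} [NontriviallyNormedField 𝕜]
    {f g : 𝕜 → 𝕜} {a f' g' : 𝕜} (hf : HasDerivAt f f' a) (hg : HasDerivAt g g' a)
    (hfa : f a = 0) (hga : g a = 0) (hg' : g' ≠ 0) :
    Tendsto (fun x => f x / g x) (𝓝[≠] a) (𝓝 (f' / g')) := by
  refine ((hasDerivAt_iff_tendsto_slope.mp hf).div
    (hasDerivAt_iff_tendsto_slope.mp hg) hg').congr' ?_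
  filter_upwards [self_mem_nhdsWithin] with x (hx : x ≠ a)
  rw [Pi.div_apply, slope_def_field, slope_def_field, hfa, hga, sub_zero, sub_zero]
  exact div_div_div_cancel_right₀ (sub_ne_zero.mpr hx) _ _

lemma gaussianPDFReal_zero_one (t : ℝ) :
    gaussianPDFReal 0 1 t = 1 / √(2 * π) * exp (-t ^ 2 / 2) := by
  simp [gaussianPDFReal]

lemma stdNormalCDF_eq_integral (x : ℝ) :
    stdNormalCDF x = ∫ t in Iic x, gaussianPDFReal 0 1 t := by
  simp only [stdNormalCDF, gaussianPDFReal_zero_one]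

lemma stdNormalCDF_add_stdNormalCDF_neg (x : ℝ) : stdNormalCDF x + stdNormalCDF (-x) = 1 := by
  have h_symm : stdNormalCDF (-x) = ∫ t in Ioi x, gaussianPDFReal 0 1 t := by
    rw [stdNormalCDF_eq_integral, ← integral_comp_neg_Ioi]
    simp only [gaussianPDFReal_zero_one, neg_sq]
  rw [h_symm, stdNormalCDF_eq_integral, intervalIntegral.integral_Iic_add_Ioi
    (integrable_gaussianPDFReal 0 1).integrableOn (integrable_gaussianPDFReal 0 1).integrableOn,
    integral_gaussianPDFReal_eq_one 0 one_ne_zero]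

lemma stdNormalCDF_zero : stdNormalCDF 0 = 1 / 2 := by
  have h := stdNormalCDF_add_stdNormalCDF_neg 0
  rw [neg_zero] at h
  linarith

lemma hasDerivAt_stdNormalCDF (x : ℝ) : HasDerivAt stdNormalCDF (gaussianPDFReal 0 1 x) x := by
  have hφ : Continuous (gaussianPDFReal 0 1) := by
    rw [gaussianPDFReal_def]; fun_prop
  refine ((hφ.integral_hasStrictDerivAt x x).hasDerivAt.const_add
    (stdNormalCDF x)).congr_of_eventuallyEq (Eventually.of_forall fun y => ?_)
  dsimp only
  rw [stdNormalCDF_eq_integral, stdNormalCDF_eq_integral, ← intervalIntegral.integral_Iic_sub_Iic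
    (integrable_gaussianPDFReal 0 1).integrableOn (integrable_gaussianPDFReal 0 1).integrableOn]
  ring

lemma hasDerivAt_one_sub_exp_neg_two_mul_mul_sub (c : ℝ) :
    HasDerivAt (fun y => 1 - exp (-2 * y * (y - c))) (-(2 * c)) 0 := by
  have hu : HasDerivAt (fun y : ℝ => -2 * y * (y - c)) (2 * c) 0 :=
    (((hasDerivAt_id' 0).const_mul (-2)).mul ((hasDerivAt_id' 0).sub_const c)).congr_deriv
      (by ring)
  simpa using hu.exp.const_sub 1

lemma hasDerivAt_one_sub_two_mul_stdNormalCDF_neg (x : ℝ) :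
    HasDerivAt (fun y => 1 - 2 * stdNormalCDF (-y)) (2 * gaussianPDFReal 0 1 (-x)) x := by
  simpa using (((hasDerivAt_stdNormalCDF (-x)).comp x (hasDerivAt_neg x)).const_mul 2).const_sub 1

lemma tendsto_one_sub_exp_div_one_sub_two_mul_stdNormalCDF_neg (c : ℝ) :
    Tendsto (fun y => (1 - exp (-2 * y * (y - c))) / (1 - 2 * stdNormalCDF (-y)))
      (𝓝[≠] 0) (𝓝 (-c * √(2 * π))) := by
  have hlim := tendsto_div_of_hasDerivAt_of_eq_zero
    (hasDerivAt_one_sub_exp_neg_two_mul_mul_sub c) (hasDerivAt_one_sub_two_mul_stdNormalCDF_neg 0)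
    (by simp) (by simp [stdNormalCDF_zero])
    (mul_pos two_pos (gaussianPDFReal_pos _ _ _ one_ne_zero)).ne'
  convert hlim using 2
  rw [neg_zero, gaussianPDFReal_zero_one]
  field_simp
  simp

theorem cond_close_density_limit :
    (∀ c : ℝ, c < 0 →
      Tendsto (fun y => condCloseDensity y c) (nhdsWithin 0 (Set.Ioi 0))
        (nhds (-c * Real.exp (-c ^ 2 / 2)))) ∧
    (∀ c : ℝ, 0 < c →
      Tendsto (fun y => condCloseDensity y c) (nhdsWithin 0 (Set.Ioi 0)) (nhds 0)) := by
  constructor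
  · intro c hc
    have hlim := ((tendsto_one_sub_exp_div_one_sub_two_mul_stdNormalCDF_neg c).mono_left
      (nhdsGT_le_nhdsNE 0)).const_mul (1 / √(2 * π) * exp (-c ^ 2 / 2))
    rw [show 1 / √(2 * π) * exp (-c ^ 2 / 2) * (-c * √(2 * π)) = -c * exp (-c ^ 2 / 2) by
      field_simp] at hlim
    refine hlim.congr' ?_
    filter_upwards [self_mem_nhdsWithin] with y (hy : 0 < y)
    rw [condCloseDensity, if_pos (hc.trans hy)]
  · intro c hc
    refine tendsto_const_nhds.congr' ?_
    filter_upwards [Ioo_mem_nhdsGT hc] with y hy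
    rw [condCloseDensity, if_neg (not_lt.mpr hy.2.le)]
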